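/- Let 0 < α ≤ β with α + β = 1. For every t > 0 and every measurable function x : (0,t] → ℝ^d with x_s ≠ 0 a.e., one has ∫_0^t |x_s|^{-α} ds ≤ N (∫_0^t s^{-α}|x_s|^{-β} ds)^{α/β} t^β, where N depends only on α and β. (If α = β the inequality holds with N = 1.) -/

import Mathlib

/-!
Write `|x_s|^{-α} = (s^{-α} |x_s|^{-β})^{α/β} · s^{α²/β}` and apply Hölder's inequality with
exponents `β/α` and `β/(β-α)`: the second factor becomes `(∫_0^t s^γ ds)^{(β-α)/β}` with
`γ = α²/(β-α)`, and `α + β = 1` gives `γ + 1 = β²/(β-α)`, so this factor is a constant times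
`t^β`. When `α = β` one only needs `1 ≤ s^{-α} t^α` on `(0, t]`.
-/

open MeasureTheory

theorem lintegral_ofReal_rpow_neg_le_weighted {X : Type*} [MeasurableSpace X] (μ : Measure X)
    {a b : ℝ} (ha : 0 < a) (hab : a < b) {u w : X → ℝ} (hu : AEMeasurable u μ)
    (hw : AEMeasurable w μ) (hu0 : ∀ᵐ x ∂μ, 0 ≤ u x) (hw0 : ∀ᵐ x ∂μ, 0 < w x) :
    ∫⁻ x, ENNReal.ofReal (u x ^ (-a)) ∂μ ≤
      (∫⁻ x, ENNReal.ofReal (w x * u x ^ (-b)) ∂μ) ^ (a / b) *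
        (∫⁻ x, ENNReal.ofReal (w x ^ (-(a / (b - a)))) ∂μ) ^ ((b - a) / b) := by
  have hb : 0 < b := ha.trans hab
  have hpq : (b / a).HolderConjugate (b / (b - a)) := by
    rw [Real.holderConjugate_iff]
    refine ⟨(one_lt_div ha).mpr hab, ?_⟩
    field_simp
    ring
  set f : X → ENNReal := fun x => ENNReal.ofReal ((w x * u x ^ (-b)) ^ (a / b))
  set g : X → ENNReal := fun x => ENNReal.ofReal (w x ^ (-(a / b)))
  have hsplit : ∀ᵐ x ∂μ, ENNReal.ofReal (u x ^ (-a)) = f x * g x := by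
    filter_upwards [hw0, hu0] with x hwx hux
    rw [← ENNReal.ofReal_mul (by positivity), Real.mul_rpow hwx.le (by positivity),
      ← Real.rpow_mul hux, mul_right_comm, ← Real.rpow_add hwx,
      add_neg_cancel, Real.rpow_zero, one_mul, show -b * (a / b) = -a by field_simp]
  have hf : ∀ᵐ x ∂μ, f x ^ (b / a) = ENNReal.ofReal (w x * u x ^ (-b)) := by
    filter_upwards [hw0, hu0] with x hwx hux
    rw [ENNReal.ofReal_rpow_of_nonneg (by positivity) hpq.nonneg, ← Real.rpow_mul (by positivity),
      show a / b * (b / a) = 1 by field_simp, Real.rpow_one]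
  have hg : ∀ᵐ x ∂μ, g x ^ (b / (b - a)) = ENNReal.ofReal (w x ^ (-(a / (b - a)))) := by
    filter_upwards [hw0] with x hwx
    rw [ENNReal.ofReal_rpow_of_nonneg (by positivity) hpq.symm.nonneg, ← Real.rpow_mul hwx.le]
    congr 2
    field_simp
  calc ∫⁻ x, ENNReal.ofReal (u x ^ (-a)) ∂μ = ∫⁻ x, (f * g) x ∂μ := lintegral_congr_ae hsplit
    _ ≤ (∫⁻ x, f x ^ (b / a) ∂μ) ^ (1 / (b / a)) *
          (∫⁻ x, g x ^ (b / (b - a)) ∂μ) ^ (1 / (b / (b - a))) :=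
      ENNReal.lintegral_mul_le_Lp_mul_Lq μ hpq (by fun_prop) (by fun_prop)
    _ = _ := by rw [lintegral_congr_ae hf, lintegral_congr_ae hg, one_div_div, one_div_div]

theorem lintegral_Ioc_ofReal_rpow {γ : ℝ} (hγ : -1 < γ) {t : ℝ} (ht : 0 ≤ t) :
    ∫⁻ s in Set.Ioc 0 t, ENNReal.ofReal (s ^ γ) = ENNReal.ofReal (t ^ (γ + 1) / (γ + 1)) := by
  have hint : IntegrableOn (fun s : ℝ => s ^ γ) (Set.Ioc 0 t) :=
    (intervalIntegrable_iff_integrableOn_Ioc_of_le ht).mp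
      (intervalIntegral.intervalIntegrable_rpow' hγ)
  rw [← ofReal_integral_eq_lintegral_ofReal hint
      ((ae_restrict_mem measurableSet_Ioc).mono fun s hs => Real.rpow_nonneg hs.1.le γ),
    ← intervalIntegral.integral_of_le ht, integral_rpow (Or.inl hγ),
    Real.zero_rpow (by linarith), sub_zero]

theorem lintegral_Ioc_ofReal_le_rpow_neg_mul {a : ℝ} (ha : 0 ≤ a) {t : ℝ} (F : ℝ → ℝ)
    (hF : ∀ s, 0 ≤ F s) :
    ∫⁻ s in Set.Ioc 0 t, ENNReal.ofReal (F s) ≤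
      (∫⁻ s in Set.Ioc 0 t, ENNReal.ofReal (s ^ (-a) * F s)) * ENNReal.ofReal (t ^ a) := by
  rw [← lintegral_mul_const' _ _ ENNReal.ofReal_ne_top]
  refine setLIntegral_mono' measurableSet_Ioc fun s ⟨hs, hst⟩ => ?_
  have hFs := hF s
  rw [← ENNReal.ofReal_mul (by positivity)]
  refine ENNReal.ofReal_le_ofReal (le_of_eq_of_le (one_mul (F s)).symm ?_)
  calc 1 * F s = s ^ (-a) * s ^ a * F s := by
        rw [← Real.rpow_add hs, neg_add_cancel, Real.rpow_zero]
    _ ≤ s ^ (-a) * t ^ a * F s := by gcongr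
    _ = s ^ (-a) * F s * t ^ a := by ring

theorem lintegral_Ioc_rpow_neg_rpow_eq {α β : ℝ} (hα : 0 < α) (hαβ : α < β) (hsum : α + β = 1)
    {t : ℝ} (ht : 0 ≤ t) :
    (∫⁻ s in Set.Ioc 0 t, ENNReal.ofReal ((s ^ (-α)) ^ (-(α / (β - α))))) ^ ((β - α) / β) =
      ENNReal.ofReal (((β - α) / β ^ 2) ^ ((β - α) / β)) * ENNReal.ofReal (t ^ β) := by
  have hβα : 0 < β - α := sub_pos.mpr hαβ
  have hβ : 0 < β := hα.trans hαβ
  have hγ : α ^ 2 / (β - α) + 1 = β ^ 2 / (β - α) := by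
    field_simp
    nlinarith
  have hpow : ∀ s ∈ Set.Ioc 0 t,
      ENNReal.ofReal ((s ^ (-α)) ^ (-(α / (β - α)))) = ENNReal.ofReal (s ^ (α ^ 2 / (β - α))) := by
    intro s hs
    rw [← Real.rpow_mul hs.1.le]
    congr 2
    ring
  rw [setLIntegral_congr_fun measurableSet_Ioc hpow,
    lintegral_Ioc_ofReal_rpow (neg_one_lt_zero.trans_le (by positivity)) ht,
    ENNReal.ofReal_rpow_of_nonneg (by positivity) (by positivity),
    ← ENNReal.ofReal_mul (by positivity), hγ,
    show t ^ (β ^ 2 / (β - α)) / (β ^ 2 / (β - α)) = (β - α) / β ^ 2 * t ^ (β ^ 2 / (β - α)) by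
      field_simp,
    Real.mul_rpow (by positivity) (by positivity), ← Real.rpow_mul ht]
  congr 3
  field_simp

theorem stmt_3_general (d : ℕ) (α β : ℝ) (hα : 0 < α) (hαβ : α ≤ β)
    (hsum : α + β = 1) :
    ∃ N : ℝ, 0 < N ∧ (α = β → N = 1) ∧
      ∀ t : ℝ, 0 < t → ∀ x : ℝ → EuclideanSpace ℝ (Fin d), Measurable x →
        (∀ᵐ s ∂(volume.restrict (Set.Ioc 0 t)), x s ≠ 0) →
        (∫⁻ s in Set.Ioc 0 t, ENNReal.ofReal (‖x s‖ ^ (-α))) ≤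
          ENNReal.ofReal N *
            (∫⁻ s in Set.Ioc 0 t,
                ENNReal.ofReal (s ^ (-α) * ‖x s‖ ^ (-β))) ^ (α / β) *
            ENNReal.ofReal (t ^ β) := by
  rcases hαβ.eq_or_lt with rfl | hlt
  · refine ⟨1, one_pos, fun _ => rfl, fun t _ x _ _ => ?_⟩
    rw [div_self hα.ne', ENNReal.rpow_one, ENNReal.ofReal_one, one_mul]
    exact lintegral_Ioc_ofReal_le_rpow_neg_mul hα.le _ fun s => by positivity
  · have hβ : 0 < β := hα.trans hlt
    have hβα : 0 < β - α := sub_pos.mpr hlt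
    refine ⟨((β - α) / β ^ 2) ^ ((β - α) / β), by positivity, fun h => absurd h hlt.ne,
      fun t ht x hx _ => ?_⟩
    have hweight : ∀ᵐ s ∂(volume.restrict (Set.Ioc 0 t)), 0 < s ^ (-α) :=
      (ae_restrict_mem measurableSet_Ioc).mono fun s hs => Real.rpow_pos_of_pos hs.1 _
    calc _ ≤ _ := lintegral_ofReal_rpow_neg_le_weighted _ hα hlt (by fun_prop) (by fun_prop)
          (ae_of_all _ fun s => norm_nonneg (x s)) hweight
      _ = _ := by rw [lintegral_Ioc_rpow_neg_rpow_eq hα hlt hsum ht.le]; ring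

theorem stmt_3 (d : ℕ) (hd : 1 ≤ d) (α β : ℝ) (hα : 0 < α) (hαβ : α ≤ β)
    (hsum : α + β = 1) :
    ∃ N : ℝ, 0 < N ∧ (α = β → N = 1) ∧
      ∀ t : ℝ, 0 < t → ∀ x : ℝ → EuclideanSpace ℝ (Fin d), Measurable x →
        (∀ᵐ s ∂(volume.restrict (Set.Ioc 0 t)), x s ≠ 0) →
        (∫⁻ s in Set.Ioc 0 t, ENNReal.ofReal (‖x s‖ ^ (-α))) ≤
          ENNReal.ofReal N *
            (∫⁻ s in Set.Ioc 0 t,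
                ENNReal.ofReal (s ^ (-α) * ‖x s‖ ^ (-β))) ^ (α / β) *
            ENNReal.ofReal (t ^ β) :=
  stmt_3_general d α β hα hαβ hsum
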